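/- arXiv:2003.06642 — 4 statements merged into one kernel-verified Lean document; each statement's English description precedes it below -/
import Mathlib

section
/- Let f ∈ S_0(R) and define g(x) = ∫_{−∞}^x f(t) dt. Then g(x) = −∫_x^{+∞} f(t) dt for all x ∈ R, g′ = f, g ∈ S_0(R), and for every k ∈ N one has sup_{x∈R} ⟨x⟩^k |g(x)| ≤ ρ_{2k+4}(f) · ∫_R (1+t²)^{−k/2−2} dt < +∞. Consequently Ff(ξ) = 2πi ξ Fg(ξ) for all ξ ∈ R. -/
open MeasureTheory Complex SchwartzMap

noncomputable section

/-- The Schwartz seminorms `ρ_ν(φ) = sup_{x ∈ ℝ, m ≤ ν} ⟨x⟩^ν |φ^{(m)}(x)|` on `𝒮(ℝ)`. -/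
def rho1 (ν : ℕ) (f : ℝ → ℂ) : ℝ :=
  ⨆ q : ℝ × Fin (ν + 1),
    Real.sqrt (1 + q.1 ^ 2) ^ ν * ‖iteratedDeriv (q.2 : ℕ) f q.1‖

open Set Filter

/-!
Because `∫ f = 0`, the primitive `g(x)` equals both `∫_{t ≤ x} f` and `-∫_{t ≥ x} f`, and one of
these two ranges lies where `|t| ≥ |x|`; there `⟨x⟩^k |f(t)| ≤ ρ_{2k+4}(f) ⟨t⟩^{-k-4}`, which
gives the weighted bound and the decay of `g`. Its derivatives are those of `f`, so `g` is a
Schwartz function. Integrating `x^(m+1) f = x^(m+1) g'` by parts shows that the moments of `g`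
vanish, and the Fourier identity is the transform of `g' = f`.
-/

lemma sqrt_one_add_sq_le_one_add_norm (x : ℝ) : √(1 + x ^ 2) ≤ 1 + ‖x‖ := by
  rw [Real.sqrt_le_left (by positivity), Real.norm_eq_abs]
  nlinarith [abs_nonneg x, sq_abs x]

lemma norm_le_sqrt_one_add_sq (x : ℝ) : ‖x‖ ≤ √(1 + x ^ 2) := by
  rw [Real.norm_eq_abs, ← Real.sqrt_sq_eq_abs]
  exact Real.sqrt_le_sqrt (by linarith)

lemma rho1_bddAbove (ν : ℕ) (f : 𝓢(ℝ, ℂ)) :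
    BddAbove (range fun q : ℝ × Fin (ν + 1) =>
      √(1 + q.1 ^ 2) ^ ν * ‖iteratedDeriv (q.2 : ℕ) f q.1‖) := by
  refine ⟨2 ^ ν * (Finset.Iic (ν, ν)).sup (fun m => SchwartzMap.seminorm ℝ m.1 m.2) f, ?_⟩
  rintro _ ⟨⟨x, m⟩, rfl⟩
  calc √(1 + x ^ 2) ^ ν * ‖iteratedDeriv m f x‖
      ≤ (1 + ‖x‖) ^ ν * ‖iteratedFDeriv ℝ m f x‖ := by
        rw [norm_iteratedFDeriv_eq_norm_iteratedDeriv]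
        gcongr
        exact sqrt_one_add_sq_le_one_add_norm x
    _ ≤ _ :=
      one_add_le_sup_seminorm_apply (𝕜 := ℝ) (m := (ν, ν)) le_rfl (Nat.lt_succ_iff.mp m.isLt) f x

lemma sqrt_one_add_sq_pow_mul_norm_le_rho1 (ν : ℕ) (f : 𝓢(ℝ, ℂ)) (x : ℝ) :
    √(1 + x ^ 2) ^ ν * ‖f x‖ ≤ rho1 ν f := by
  simpa [rho1] using le_ciSup (rho1_bddAbove ν f) (x, 0)

lemma rho1_nonneg (ν : ℕ) (f : 𝓢(ℝ, ℂ)) : 0 ≤ rho1 ν f :=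
  (by positivity : (0 : ℝ) ≤ _).trans (sqrt_one_add_sq_pow_mul_norm_le_rho1 ν f 0)

lemma integrable_one_add_sq_rpow {c : ℝ} (hc : c < -1 / 2) :
    Integrable fun t : ℝ => (1 + t ^ 2) ^ c := by
  have h := integrable_rpow_neg_one_add_norm_sq (E := ℝ) (μ := volume) (r := -2 * c)
    (by simp; linarith)
  simpa [Real.norm_eq_abs, sq_abs, neg_mul, neg_neg, mul_div_cancel_left₀] using h

lemma sqrt_one_add_sq_pow_mul_norm_le_rho1_mul_rpow (f : 𝓢(ℝ, ℂ)) (k : ℕ) {x t : ℝ}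
    (hxt : x ^ 2 ≤ t ^ 2) :
    √(1 + x ^ 2) ^ k * ‖f t‖ ≤ rho1 (2 * k + 4) f * (1 + t ^ 2) ^ (-((k : ℝ) / 2) - 2) := by
  have ht : 0 < 1 + t ^ 2 := by positivity
  have hx : √(1 + x ^ 2) ^ k ≤ (1 + t ^ 2) ^ ((k : ℝ) / 2) := by
    rw [Real.sqrt_eq_rpow, ← Real.rpow_natCast, ← Real.rpow_mul (by positivity), one_div_mul_eq_div]
    gcongr
  have hsplit : (1 + t ^ 2) ^ ((k : ℝ) / 2) =
      (1 + t ^ 2) ^ (-((k : ℝ) / 2) - 2) * √(1 + t ^ 2) ^ (2 * k + 4) := by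
    rw [show 2 * k + 4 = 2 * (k + 2) by ring, pow_mul, Real.sq_sqrt ht.le,
      ← Real.rpow_natCast (1 + t ^ 2) (k + 2), ← Real.rpow_add ht]
    push_cast
    ring_nf
  calc √(1 + x ^ 2) ^ k * ‖f t‖ ≤ (1 + t ^ 2) ^ ((k : ℝ) / 2) * ‖f t‖ := by gcongr
    _ = (1 + t ^ 2) ^ (-((k : ℝ) / 2) - 2) * (√(1 + t ^ 2) ^ (2 * k + 4) * ‖f t‖) := by
        rw [hsplit, mul_assoc]
    _ ≤ (1 + t ^ 2) ^ (-((k : ℝ) / 2) - 2) * rho1 (2 * k + 4) f := by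
        gcongr
        exact sqrt_one_add_sq_pow_mul_norm_le_rho1 _ f t
    _ = _ := mul_comm _ _

lemma integrable_one_add_sq_rpow_neg_half_sub_two (k : ℕ) :
    Integrable fun t : ℝ => (1 + t ^ 2) ^ (-((k : ℝ) / 2) - 2) :=
  integrable_one_add_sq_rpow (by linarith [(by positivity : (0 : ℝ) ≤ k / 2)])

lemma sqrt_one_add_sq_pow_mul_norm_setIntegral_le (f : 𝓢(ℝ, ℂ)) (k : ℕ) (x : ℝ) {s : Set ℝ}
    (hs : MeasurableSet s) (hxs : ∀ t ∈ s, x ^ 2 ≤ t ^ 2) :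
    √(1 + x ^ 2) ^ k * ‖∫ t in s, f t‖ ≤
      rho1 (2 * k + 4) f * ∫ t : ℝ, (1 + t ^ 2) ^ (-((k : ℝ) / 2) - 2) := by
  have hw := integrable_one_add_sq_rpow_neg_half_sub_two k
  calc √(1 + x ^ 2) ^ k * ‖∫ t in s, f t‖ ≤ √(1 + x ^ 2) ^ k * ∫ t in s, ‖f t‖ := by
        gcongr
        exact norm_integral_le_integral_norm _
    _ = ∫ t in s, √(1 + x ^ 2) ^ k * ‖f t‖ := (integral_const_mul _ _).symm
    _ ≤ ∫ t in s, rho1 (2 * k + 4) f * (1 + t ^ 2) ^ (-((k : ℝ) / 2) - 2) :=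
        setIntegral_mono_on (f.integrable.norm.const_mul _).integrableOn
          (hw.const_mul _).integrableOn hs
          fun t ht => sqrt_one_add_sq_pow_mul_norm_le_rho1_mul_rpow f k (hxs t ht)
    _ = rho1 (2 * k + 4) f * ∫ t in s, (1 + t ^ 2) ^ (-((k : ℝ) / 2) - 2) :=
        integral_const_mul _ _
    _ ≤ _ := mul_le_mul_of_nonneg_left
        (setIntegral_le_integral hw (Eventually.of_forall fun t => by positivity))
        (rho1_nonneg _ f)

section Primitive

variable {E : Type*} [NormedAddCommGroup E] [NormedSpace ℝ E] {f : ℝ → E}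

lemma integral_Iic_eq_neg_integral_Ici (hf : Integrable f) (h0 : ∫ t, f t = 0) (x : ℝ) :
    ∫ t in Iic x, f t = -∫ t in Ici x, f t := by
  rw [integral_Ici_eq_integral_Ioi, eq_neg_iff_add_eq_zero, ← h0]
  exact intervalIntegral.integral_Iic_add_Ioi hf.integrableOn hf.integrableOn

lemma hasDerivAt_integral_Iic [CompleteSpace E] (hf : Integrable f) {x : ℝ}
    (hx : ContinuousAt f x) : HasDerivAt (fun y => ∫ t in Iic y, f t) (f x) x := by
  have hsplit : (fun y => ∫ t in Iic y, f t) = fun y => (∫ t in Iic 0, f t) + ∫ t in 0..y, f t := by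
    funext y
    rw [← intervalIntegral.integral_Iic_sub_Iic hf.integrableOn hf.integrableOn, add_sub_cancel]
  rw [hsplit]
  exact (intervalIntegral.integral_hasDerivAt_right hf.intervalIntegrable
    hf.aestronglyMeasurable.stronglyMeasurableAtFilter hx).const_add _

lemma deriv_integral_Iic [CompleteSpace E] (hf : Integrable f) (hc : Continuous f) :
    deriv (fun y => ∫ t in Iic y, f t) = f :=
  funext fun _ => (hasDerivAt_integral_Iic hf hc.continuousAt).deriv

end Primitive

lemma sqrt_one_add_sq_pow_mul_norm_integral_Iic_le (f : 𝓢(ℝ, ℂ)) (h0 : ∫ t, f t = 0)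
    (k : ℕ) (x : ℝ) :
    √(1 + x ^ 2) ^ k * ‖∫ t in Iic x, f t‖ ≤
      rho1 (2 * k + 4) f * ∫ t : ℝ, (1 + t ^ 2) ^ (-((k : ℝ) / 2) - 2) := by
  rcases le_total x 0 with hx | hx
  · exact sqrt_one_add_sq_pow_mul_norm_setIntegral_le f k x measurableSet_Iic
      fun t (ht : t ≤ x) => by nlinarith
  · rw [integral_Iic_eq_neg_integral_Ici f.integrable h0, norm_neg]
    exact sqrt_one_add_sq_pow_mul_norm_setIntegral_le f k x measurableSet_Ici
      fun t (ht : x ≤ t) => by nlinarith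

namespace SchwartzMap

def primitive (f : 𝓢(ℝ, ℂ)) (h0 : ∫ t, f t = 0) : 𝓢(ℝ, ℂ) where
  toFun x := ∫ t in Iic x, f t
  smooth' := contDiff_infty_iff_deriv.mpr
    ⟨fun _ => (hasDerivAt_integral_Iic f.integrable f.continuous.continuousAt).differentiableAt,
      by rw [deriv_integral_Iic f.integrable f.continuous]; exact f.smooth ⊤⟩
  decay' k n := by
    cases n with
    | zero =>
      refine ⟨rho1 (2 * k + 4) f * ∫ t : ℝ, (1 + t ^ 2) ^ (-((k : ℝ) / 2) - 2), fun x => ?_⟩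
      rw [norm_iteratedFDeriv_zero]
      exact (mul_le_mul_of_nonneg_right (pow_le_pow_left₀ (norm_nonneg x)
        (norm_le_sqrt_one_add_sq x) k) (norm_nonneg _)).trans
        (sqrt_one_add_sq_pow_mul_norm_integral_Iic_le f h0 k x)
    | succ n =>
      obtain ⟨C, hC⟩ := f.decay' k n
      refine ⟨C, fun x => ?_⟩
      rw [norm_iteratedFDeriv_eq_norm_iteratedDeriv, iteratedDeriv_succ',
        deriv_integral_Iic f.integrable f.continuous, ← norm_iteratedFDeriv_eq_norm_iteratedDeriv]
      exact hC x

variable (f : 𝓢(ℝ, ℂ)) (h0 : ∫ t, f t = 0)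

lemma hasDerivAt_primitive (x : ℝ) : HasDerivAt (f.primitive h0) (f x) x :=
  hasDerivAt_integral_Iic f.integrable f.continuous.continuousAt

lemma deriv_primitive : deriv (f.primitive h0) = f :=
  deriv_integral_Iic f.integrable f.continuous

lemma integrable_ofReal_pow_mul (m : ℕ) : Integrable fun x : ℝ => (x : ℂ) ^ m * f x :=
  (f.integrable_pow_mul volume m).mono'
    ((continuous_ofReal.pow m).mul f.continuous).aestronglyMeasurable
    (Eventually.of_forall fun x => by simp)

lemma integral_ofReal_pow_mul_eq_zero_of_hasDerivAt {F : 𝓢(ℝ, ℂ)}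
    (hF : ∀ x, HasDerivAt F (f x) x) {m : ℕ} (hm : ∫ x : ℝ, (x : ℂ) ^ (m + 1) * f x = 0) :
    ∫ x : ℝ, (x : ℂ) ^ m * F x = 0 := by
  have hpow (x : ℝ) : HasDerivAt (fun y : ℝ => (y : ℂ) ^ (m + 1)) ((m + 1) * (x : ℂ) ^ m) x := by
    simpa using (hasDerivAt_pow (m + 1) (x : ℂ)).comp_ofReal
  have hparts := integral_mul_deriv_eq_deriv_mul_of_integrable (fun x _ => hpow x)
    (fun x _ => hF x) (f.integrable_ofReal_pow_mul (m + 1))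
    (by simpa only [Pi.mul_def, mul_assoc] using
      (F.integrable_ofReal_pow_mul m).const_mul ((m : ℂ) + 1))
    (F.integrable_ofReal_pow_mul (m + 1))
  simp_rw [mul_assoc, integral_const_mul] at hparts
  rw [hm, eq_comm, neg_eq_zero] at hparts
  exact (mul_eq_zero.mp hparts).resolve_left (Nat.cast_add_one_ne_zero m)

end SchwartzMap

/-- For `f ∈ 𝒮₀(ℝ)`, the primitive `g(x) = ∫_{−∞}^x f(t) dt`
equals `−∫_x^∞ f(t) dt`, satisfies `g' = f`, belongs to `𝒮₀(ℝ)`, obeys the bound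
`⟨x⟩^k |g(x)| ≤ ρ_{2k+4}(f) ∫ (1+t²)^{−k/2−2} dt < ∞`, and `Ff(ξ) = 2πiξ Fg(ξ)`. -/
theorem lizorkin_primitive (f : SchwartzMap ℝ ℂ)
    (hf : ∀ m : ℕ, ∫ x : ℝ, (x : ℂ) ^ m * f x = 0) :
    (∀ x : ℝ, (∫ t in Set.Iic x, f t) = -∫ t in Set.Ici x, f t) ∧
    (∀ x : ℝ, HasDerivAt (fun y => ∫ t in Set.Iic y, f t) (f x) x) ∧
    (∃ G : SchwartzMap ℝ ℂ, (⇑G = fun x => ∫ t in Set.Iic x, f t) ∧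
      ∀ m : ℕ, ∫ x : ℝ, (x : ℂ) ^ m * G x = 0) ∧
    (∀ k : ℕ,
      Integrable (fun t : ℝ => ((1 + t ^ 2 : ℝ) ^ (-((k : ℝ) / 2) - 2) : ℝ)) ∧
      ∀ x : ℝ,
        Real.sqrt (1 + x ^ 2) ^ k * ‖∫ t in Set.Iic x, f t‖ ≤
          rho1 (2 * k + 4) (⇑f) *
            ∫ t : ℝ, ((1 + t ^ 2 : ℝ) ^ (-((k : ℝ) / 2) - 2) : ℝ)) ∧
    (∀ ξ : ℝ,
      VectorFourier.fourierIntegral Real.fourierChar volume (innerₗ ℝ) (⇑f) ξ =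
        2 * (Real.pi : ℂ) * Complex.I * (ξ : ℂ) *
          VectorFourier.fourierIntegral Real.fourierChar volume (innerₗ ℝ)
            (fun x => ∫ t in Set.Iic x, f t) ξ) := by
  have h0 : ∫ t, f t = 0 := by simpa using hf 0
  set G := f.primitive h0
  refine ⟨integral_Iic_eq_neg_integral_Ici f.integrable h0, f.hasDerivAt_primitive h0,
    ⟨G, rfl, fun m =>
      f.integral_ofReal_pow_mul_eq_zero_of_hasDerivAt (f.hasDerivAt_primitive h0) (hf (m + 1))⟩,
    fun k => ⟨integrable_one_add_sq_rpow_neg_half_sub_two k,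
      sqrt_one_add_sq_pow_mul_norm_integral_Iic_le f h0 k⟩, fun ξ => ?_⟩
  have hfourier := congrFun (Real.fourier_deriv G.integrable G.differentiable
    (by rw [f.deriv_primitive h0]; exact f.integrable)) ξ
  rwa [f.deriv_primitive h0, smul_eq_mul] at hfourier

end
end

section
/- Fourier slice theorem for the affine Radon transform: define ψ: R×(R\{0}) → R² by ψ(v,τ) = (τ, τv). For every f ∈ L¹(R²) ∩ L²(R²) there exists a Lebesgue-negligible set E ⊆ R such that for all v ∉ E the function R^aff f(v,·) belongs to L²(R) and satisfies R^aff f(v,·) = F^{−1}[Ff ∘ ψ(v,·)], i.e. F(R^aff f(v,·))(τ) = Ff(τ, τv) for almost every τ. -/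
open MeasureTheory Complex SchwartzMap

noncomputable section

/-- The 1D Fourier transform `Fφ(ξ) = ∫ φ(x) e^{−2πi ξ x} dx`. -/
def FT1 (f : ℝ → ℂ) (ξ : ℝ) : ℂ :=
  ∫ x : ℝ, Complex.exp (-2 * (Real.pi : ℂ) * Complex.I * (ξ * x)) * f x

/-- The 2D Fourier transform `Fφ(ξ) = ∫ φ(x) e^{−2πi ξ·x} dx` on `ℝ × ℝ`. -/
def FT2 (f : ℝ × ℝ → ℂ) (ξ : ℝ × ℝ) : ℂ :=
  ∫ x : ℝ × ℝ,
    Complex.exp (-2 * (Real.pi : ℂ) * Complex.I * (ξ.1 * x.1 + ξ.2 * x.2)) * f x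

/-- `S_{b,s,a}ψ(x) = |a|^{-3/4} ψ(A_a⁻¹ S_s⁻¹ (x − b))`, where
`S_s = [[1,−s],[0,1]]` and `A_a = a·diag(1,|a|^{−1/2})`. -/
def shearletFn (ψ : ℝ × ℝ → ℂ) (b1 b2 s a : ℝ) (x : ℝ × ℝ) : ℂ :=
  ((|a| ^ (-(3 : ℝ)/4) : ℝ) : ℂ) *
    ψ (((x.1 - b1) + s * (x.2 - b2)) / a, Real.sqrt |a| * (x.2 - b2) / a)

/-- The shearlet transform `S_ψ f(b,s,a) = ∫ f(x) conj (S_{b,s,a}ψ(x)) dx`. -/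
def shearTrans (ψ f : ℝ × ℝ → ℂ) (b1 b2 s a : ℝ) : ℂ :=
  ∫ x : ℝ × ℝ, f x * (starRingEnd ℂ) (shearletFn ψ b1 b2 s a x)

/-- The 1D wavelet transform `W_χ g(b,a) = ∫ g(x) |a|^{-1/2} conj (χ((x−b)/a)) dx`. -/
def waveletTrans (χ g : ℝ → ℂ) (b a : ℝ) : ℂ :=
  ∫ x : ℝ, g x * (starRingEnd ℂ) (((|a| ^ (-(1 : ℝ)/2) : ℝ) : ℂ) * χ ((x - b) / a))

/-- The affine Radon transform `R^aff f(v,t) = ∫ f(t − vy, y) dy`. -/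
def radonAff (f : ℝ × ℝ → ℂ) (v t : ℝ) : ℂ :=
  ∫ y : ℝ, f (t - v * y, y)

/-- The polar Radon transform
`R^pol f(θ,q) = ∫ f(q cos θ − y sin θ, q sin θ + y cos θ) dy`. -/
def radonPol (f : ℝ × ℝ → ℂ) (θ q : ℝ) : ℂ :=
  ∫ y : ℝ, f (q * Real.cos θ - y * Real.sin θ, q * Real.sin θ + y * Real.cos θ)

/-- The ridgelet transform `R_χ f(θ,b,a) = ∫ f(x) conj (a⁻¹ χ((x·n(θ) − b)/a)) dx`. -/
def ridgeTrans (χ : ℝ → ℂ) (f : ℝ × ℝ → ℂ) (θ b a : ℝ) : ℂ :=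
  ∫ x : ℝ × ℝ,
    f x * (starRingEnd ℂ) (((a : ℂ))⁻¹ *
      χ ((x.1 * Real.cos θ + x.2 * Real.sin θ - b) / a))

/-- The shearlet synthesis operator
`S^t_ψ Φ(x) = ∫∫∫ Φ(b,s,a) S_{b,s,a}ψ(x) db ds da/|a|³`. -/
def synthOp (ψ : ℝ × ℝ → ℂ) (Φ : ℝ → ℝ → ℝ → ℝ → ℂ) (x : ℝ × ℝ) : ℂ :=
  ∫ q : (ℝ × ℝ) × ℝ × ℝ,
    ((|q.2.2| ^ 3)⁻¹ : ℝ) •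
      (Φ q.1.1 q.1.2 q.2.1 q.2.2 * shearletFn ψ q.1.1 q.1.2 q.2.1 q.2.2 x)

/-- Partial derivative in the first slot `b₁`. -/
def sderiv1 (Φ : ℝ → ℝ → ℝ → ℝ → ℂ) : ℝ → ℝ → ℝ → ℝ → ℂ :=
  fun b1 b2 s a => deriv (fun t => Φ t b2 s a) b1

/-- Partial derivative in the second slot `b₂`. -/
def sderiv2 (Φ : ℝ → ℝ → ℝ → ℝ → ℂ) : ℝ → ℝ → ℝ → ℝ → ℂ :=
  fun b1 b2 s a => deriv (fun t => Φ b1 t s a) b2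

/-- Partial derivative in the third slot `s`. -/
def sderiv3 (Φ : ℝ → ℝ → ℝ → ℝ → ℂ) : ℝ → ℝ → ℝ → ℝ → ℂ :=
  fun b1 b2 s a => deriv (fun t => Φ b1 b2 t a) s

/-- Partial derivative in the fourth slot `a`. -/
def sderiv4 (Φ : ℝ → ℝ → ℝ → ℝ → ℂ) : ℝ → ℝ → ℝ → ℝ → ℂ :=
  fun b1 b2 s a => deriv (fun t => Φ b1 b2 s t) a

/-- `∂_a^γ ∂_s^β ∂_{b₂}^{α₂} ∂_{b₁}^{α₁} Φ`. -/
def shearDeriv (α1 α2 β γ : ℕ) (Φ : ℝ → ℝ → ℝ → ℝ → ℂ) : ℝ → ℝ → ℝ → ℝ → ℂ :=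
  sderiv4^[γ] (sderiv3^[β] (sderiv2^[α2] (sderiv1^[α1] Φ)))

/-- The japanese bracket `⟨x⟩ = (1+x²)^{1/2}`. -/
def jb (x : ℝ) : ℝ := Real.sqrt (1 + x ^ 2)

/-- The seminorms `p^{α1,α2,β,γ}_{k1,k2,l,m}` of the space `𝒮(𝕊)`,
`𝕊 = ℝ² × ℝ × ℝˣ`. -/
def shearSeminorm (k1 k2 l m α1 α2 β γ : ℕ) (Φ : ℝ → ℝ → ℝ → ℝ → ℂ) : ℝ :=
  ⨆ q : ℝ × ℝ × ℝ × {x : ℝ // x ≠ 0},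
    jb q.1 ^ k1 * jb q.2.1 ^ k2 * jb q.2.2.1 ^ l *
      (|q.2.2.2.1| ^ m + (|q.2.2.2.1| ^ m)⁻¹) *
      ‖shearDeriv α1 α2 β γ Φ q.1 q.2.1 q.2.2.1 q.2.2.2.1‖

/-- Membership in the space `𝒮(𝕊)` of highly localized functions on
`𝕊 = ℝ² × ℝ × ℝˣ`: smoothness on `{a ≠ 0}` together with the finiteness of all
the seminorms `p^{α1,α2,β,γ}_{k1,k2,l,m}`. -/
def HLocalized (Φ : ℝ → ℝ → ℝ → ℝ → ℂ) : Prop :=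
  ContDiffOn ℝ (⊤ : ℕ∞) (fun p : ℝ × ℝ × ℝ × ℝ => Φ p.1 p.2.1 p.2.2.1 p.2.2.2)
      {p : ℝ × ℝ × ℝ × ℝ | p.2.2.2 ≠ 0} ∧
    ∀ k1 k2 l m α1 α2 β γ : ℕ, ∃ C : ℝ, ∀ b1 b2 s a : ℝ, a ≠ 0 →
      jb b1 ^ k1 * jb b2 ^ k2 * jb s ^ l * (|a| ^ m + (|a| ^ m)⁻¹) *
        ‖shearDeriv α1 α2 β γ Φ b1 b2 s a‖ ≤ C

/-- Partial derivative `∂_{x₁}` on `ℝ × ℝ`. -/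
def pdx (f : ℝ × ℝ → ℂ) : ℝ × ℝ → ℂ := fun p => deriv (fun t => f (t, p.2)) p.1

/-- Partial derivative `∂_{x₂}` on `ℝ × ℝ`. -/
def pdy (f : ℝ × ℝ → ℂ) : ℝ × ℝ → ℂ := fun p => deriv (fun t => f (p.1, t)) p.2

/-- The Schwartz seminorms `ρ_ν(φ) = sup_{x,|m|≤ν} ⟨x⟩^ν |∂^m φ(x)|` on `𝒮(ℝ²)`. -/
def schwartzRho (ν : ℕ) (f : ℝ × ℝ → ℂ) : ℝ :=
  ⨆ q : (ℝ × ℝ) × {m : ℕ × ℕ // m.1 + m.2 ≤ ν},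
    Real.sqrt (1 + q.1.1 ^ 2 + q.1.2 ^ 2) ^ ν *
      ‖pdx^[q.2.1.1] (pdy^[q.2.1.2] f) q.1‖

/-- Vanishing moments on `ℝ²`: `∫ x^m f(x) dx = 0` for all multi-indices `m ∈ ℕ²`,
i.e. membership of a Schwartz function in the Lizorkin space `𝒮₀(ℝ²)`. -/
def VanishingMoments2 (f : ℝ × ℝ → ℂ) : Prop :=
  ∀ m : ℕ × ℕ, ∫ x : ℝ × ℝ, (x.1 : ℂ) ^ m.1 * (x.2 : ℂ) ^ m.2 * f x = 0

section FourierSliceAux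

open Function
open scoped ENNReal NNReal


lemma sq_rpow (b : ℝ≥0∞) : b * b = b ^ (2:ℝ) := by
  rw [show (2:ℝ) = ((2:ℕ):ℝ) by norm_num, ENNReal.rpow_natCast, sq]

lemma mul_le_sq_add_sq (a b : ℝ≥0∞) : a * b ≤ a ^ (2:ℝ) + b ^ (2:ℝ) := by
  rcases le_total a b with h | h
  · calc a * b ≤ b * b := by gcongr
    _ = b ^ (2:ℝ) := sq_rpow b
    _ ≤ _ := le_add_self
  · calc a * b ≤ a * a := by gcongr
    _ = a ^ (2:ℝ) := sq_rpow a
    _ ≤ _ := le_self_add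

lemma lint_comp_affine_le {c : ℝ} (hc : 1 ≤ |c|) (h : ℝ → ℝ≥0∞) (hh : Measurable h)
    (u : ℝ) : ∫⁻ v, h (u + v * c) ≤ ∫⁻ w, h w := by
  have hc0 : c ≠ 0 := by intro h0; simp [h0] at hc; linarith
  have hmap : Measure.map (fun v : ℝ => u + v * c) volume
      = ENNReal.ofReal |c⁻¹| • volume := by
    have : (fun v : ℝ => u + v * c) = (fun x : ℝ => x + u) ∘ (fun v : ℝ => c * v) := by
      ext v; simp [mul_comm]; ring
    rw [this, ← Measure.map_map (by fun_prop) (by fun_prop), Real.map_volume_mul_left hc0,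
      Measure.map_smul, map_add_right_eq_self]
  have h2 := lintegral_map (μ := volume) hh (by fun_prop : Measurable fun v : ℝ => u + v * c)
  rw [hmap, lintegral_smul_measure] at h2
  rw [← h2]
  calc ENNReal.ofReal |c⁻¹| * ∫⁻ w, h w ≤ 1 * ∫⁻ w, h w := by
        gcongr
        rw [show (1:ℝ≥0∞) = ENNReal.ofReal 1 by simp]
        apply ENNReal.ofReal_le_ofReal
        rw [abs_inv]
        exact inv_le_one_of_one_le₀ hc
  _ = _ := one_mul _

lemma lint_CS (h k : ℝ → ℝ≥0∞) (hh : Measurable h) (hk : Measurable k) :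
    ∫⁻ u, h u * k u ≤ (∫⁻ u, h u ^ (2:ℝ)) ^ (1/2 : ℝ) * (∫⁻ u, k u ^ (2:ℝ)) ^ (1/2 : ℝ) := by
  have hpq : Real.HolderConjugate 2 2 := by constructor <;> norm_num
  have := ENNReal.lintegral_mul_le_Lp_mul_Lq (volume : Measure ℝ)
    hpq hh.aemeasurable hk.aemeasurable
  simpa using this

lemma slice_sq (g : ℝ × ℝ → ℝ≥0∞) (hg : Measurable g) (V : ℝ) :
    ∫⁻ v in Set.Icc (-V) V, ∫⁻ t, (∫⁻ y, g (t - v * y, y)) ^ (2:ℝ)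
      ≤ ENNReal.ofReal (2*V) * (4 * ∫⁻ p : ℝ × ℝ, g p ^ (2:ℝ))
        + (∫⁻ p : ℝ × ℝ, g p) ^ (2:ℝ) := by
  set A := Set.Icc (-V) V with hA
  set M1 := ∫⁻ p : ℝ × ℝ, g p with hM1
  set M2 := ∫⁻ p : ℝ × ℝ, g p ^ (2:ℝ) with hM2
  set C0 := ENNReal.ofReal (2*V) with hC0
  set B : ℝ → ℝ≥0∞ := fun y => ∫⁻ u, g (u, y) with hB
  set H : ℝ → ℝ≥0∞ := fun y => (∫⁻ u, g (u, y) ^ (2:ℝ)) ^ (1/2:ℝ) with hH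
  set J : ℝ → ℝ → ℝ≥0∞ := fun y z => (Set.Icc (y-1) (y+1)).indicator 1 z with hJ
  have hBm : Measurable B := Measurable.lintegral_prod_right' (ν := volume)
    (f := fun q : ℝ × ℝ => g (q.2, q.1)) (by fun_prop)
  have hH2 : ∀ y, H y ^ (2:ℝ) = ∫⁻ u, g (u, y) ^ (2:ℝ) := by
    intro y
    rw [hH, ← ENNReal.rpow_mul]
    norm_num
  have hHsqm : Measurable fun y : ℝ => ∫⁻ u, g (u, y) ^ (2:ℝ) :=
    Measurable.lintegral_prod_right' (ν := volume)
      (f := fun q : ℝ × ℝ => g (q.2, q.1) ^ (2:ℝ)) (by fun_prop)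
  have hHm : Measurable H := by rw [hH]; fun_prop
  have hJm1 : ∀ y, Measurable (J y) := fun y =>
    measurable_const.indicator measurableSet_Icc
  have hJint : ∀ y, ∫⁻ z, J y z = 2 := by
    intro y
    rw [hJ]
    rw [lintegral_indicator_one measurableSet_Icc, Real.volume_Icc]
    rw [show y + 1 - (y - 1) = (2:ℝ) by ring]
    exact ENNReal.ofReal_ofNat 2
  have hJsymm : ∀ y z, J y z = J z y := by
    intro y z
    rw [hJ]
    simp only [Set.indicator_apply, Set.mem_Icc]
    congr 1
    simp only [eq_iff_iff]
    constructor <;> intro h <;> constructor <;> linarith [h.1, h.2]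
  have hBsum : ∫⁻ y, B y = M1 := by
    rw [hM1, Measure.volume_eq_prod, lintegral_prod_symm _ hg.aemeasurable]
  have hHsum : ∫⁻ y, H y ^ (2:ℝ) = M2 := by
    simp_rw [hH2]
    rw [hM2, Measure.volume_eq_prod,
      lintegral_prod_symm _ (by fun_prop : AEMeasurable (fun p : ℝ × ℝ => g p ^ (2:ℝ)) _)]
  -- Step 1: expand the square
  have step1 : ∀ v : ℝ, ∀ t : ℝ, (∫⁻ y, g (t - v * y, y)) ^ (2:ℝ)
      = ∫⁻ y, ∫⁻ z, g (t - v*y, y) * g (t - v*z, z) := by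
    intro v t
    have hGm : Measurable fun y : ℝ => g (t - v*y, y) := by fun_prop
    calc (∫⁻ y, g (t - v*y, y)) ^ (2:ℝ)
        = (∫⁻ y, g (t - v*y, y)) * (∫⁻ z, g (t - v*z, z)) := (sq_rpow _).symm
      _ = ∫⁻ y, g (t - v*y, y) * ∫⁻ z, g (t - v*z, z) := (lintegral_mul_const _ hGm).symm
      _ = ∫⁻ y, ∫⁻ z, g (t - v*y, y) * g (t - v*z, z) :=
          lintegral_congr fun y => (lintegral_const_mul _ hGm).symm
  -- Step 2: move the t-integral innermost
  have step2 : ∀ v : ℝ, ∫⁻ t, ∫⁻ y, ∫⁻ z, g (t - v*y, y) * g (t - v*z, z)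
      = ∫⁻ y, ∫⁻ z, ∫⁻ t, g (t - v*y, y) * g (t - v*z, z) := by
    intro v
    rw [lintegral_lintegral_swap]
    · exact lintegral_congr fun y => lintegral_lintegral_swap
        (Measurable.aemeasurable (by
          have := Measurable.mul
            (hg.comp (by fun_prop : Measurable fun q : ℝ × ℝ => (q.1 - v*y, y)))
            (hg.comp (by fun_prop : Measurable fun q : ℝ × ℝ => (q.1 - v*q.2, q.2)))
          exact this))
    · apply Measurable.aemeasurable
      exact Measurable.lintegral_prod_right'
        (f := fun q : (ℝ × ℝ) × ℝ => g (q.1.1 - v*q.1.2, q.1.2) * g (q.1.1 - v*q.2, q.2))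
        (by fun_prop)
  -- Step 3: translation in t
  have step3 : ∀ v y z : ℝ, ∫⁻ t, g (t - v*y, y) * g (t - v*z, z)
      = ∫⁻ u, g (u, y) * g (u + v*(y-z), z) := by
    intro v y z
    have h := lintegral_add_right_eq_self (μ := volume)
      (fun t => g (t - v*y, y) * g (t - v*z, z)) (v*y)
    rw [← h]
    apply lintegral_congr
    intro u
    rw [show u + v*y - v*y = u by ring, show u + v*y - v*z = u + v*(y-z) by ring]
  -- Step 4: move the v-integral inwards
  have hQm : Measurable fun q : ℝ × ℝ × ℝ × ℝ =>
      g (q.2.2.2, q.2.1) * g (q.2.2.2 + q.1*(q.2.1 - q.2.2.1), q.2.2.1) := by fun_prop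
  have step4 : ∫⁻ v in A, ∫⁻ y, ∫⁻ z, ∫⁻ u, g (u, y) * g (u + v*(y-z), z)
      = ∫⁻ y, ∫⁻ z, ∫⁻ v in A, ∫⁻ u, g (u, y) * g (u + v*(y-z), z) := by
    rw [lintegral_lintegral_swap]
    · refine lintegral_congr fun y => lintegral_lintegral_swap ?_
      refine Measurable.aemeasurable ?_
      exact Measurable.lintegral_prod_right'
        (f := fun q : (ℝ × ℝ) × ℝ => g (q.2, y) * g (q.2 + q.1.1*(y - q.1.2), q.1.2))
        (by fun_prop)
    · refine Measurable.aemeasurable ?_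
      refine Measurable.lintegral_prod_right'
        (f := fun q : (ℝ × ℝ) × ℝ => ∫⁻ u, g (u, q.1.2) * g (u + q.1.1*(q.1.2 - q.2), q.2)) ?_
      exact Measurable.lintegral_prod_right'
        (f := fun q : ((ℝ × ℝ) × ℝ) × ℝ =>
          g (q.2, q.1.1.2) * g (q.2 + q.1.1.1*(q.1.1.2 - q.1.2), q.1.2))
        (by fun_prop)
  -- Step 5: pointwise bound on the v-integral
  have step5 : ∀ y z : ℝ, ∫⁻ v in A, ∫⁻ u, g (u, y) * g (u + v*(y-z), z)
      ≤ C0 * (J y z * H y ^ (2:ℝ) + J y z * H z ^ (2:ℝ)) + B y * B z := by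
    intro y z
    by_cases hyz : |y - z| ≤ 1
    · have hJ1 : J y z = 1 := by
        rw [hJ]
        have : z ∈ Set.Icc (y-1) (y+1) := by
          rw [Set.mem_Icc]
          rw [abs_sub_le_iff] at hyz
          constructor <;> linarith [hyz.1, hyz.2]
        simp [Set.indicator_of_mem this]
      have hQle : ∀ v : ℝ, (∫⁻ u, g (u, y) * g (u + v*(y-z), z)) ≤ H y * H z := by
        intro v
        calc ∫⁻ u, g (u, y) * g (u + v*(y-z), z)
            ≤ (∫⁻ u, g (u, y) ^ (2:ℝ)) ^ (1/2:ℝ) *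
              (∫⁻ u, g (u + v*(y-z), z) ^ (2:ℝ)) ^ (1/2:ℝ) :=
              lint_CS _ _ (by fun_prop) (by fun_prop)
          _ = H y * H z := by
              rw [hH]
              congr 2
              exact lintegral_add_right_eq_self (μ := volume)
                (fun u => g (u, z) ^ (2:ℝ)) (v*(y-z))
      calc ∫⁻ v in A, ∫⁻ u, g (u, y) * g (u + v*(y-z), z)
          ≤ ∫⁻ _ in A, H y * H z := lintegral_mono fun v => hQle v
        _ = (H y * H z) * volume A := setLIntegral_const A _
        _ ≤ (H y ^ (2:ℝ) + H z ^ (2:ℝ)) * C0 := by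
            have hvol : volume A ≤ C0 := by
              rw [hA, Real.volume_Icc, hC0]
              exact ENNReal.ofReal_le_ofReal (by linarith)
            exact mul_le_mul' (mul_le_sq_add_sq _ _) hvol
        _ = C0 * (J y z * H y ^ (2:ℝ) + J y z * H z ^ (2:ℝ)) := by
            rw [hJ1, one_mul, one_mul, mul_comm]
        _ ≤ _ := le_self_add
    · have hJ0 : J y z = 0 := by
        rw [hJ]
        have : z ∉ Set.Icc (y-1) (y+1) := by
          rw [Set.mem_Icc]
          rw [not_le] at hyz
          rcases abs_cases (y - z) with ⟨h1, _⟩ | ⟨h1, _⟩ <;> rw [h1] at hyz <;>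
            intro hc <;> [skip; skip] <;> [exact absurd hc.1 (by linarith); exact absurd hc.2 (by linarith)]
        simp [Set.indicator_of_notMem this]
      have hc1 : 1 ≤ |y - z| := le_of_lt (not_le.mp hyz)
      calc ∫⁻ v in A, ∫⁻ u, g (u, y) * g (u + v*(y-z), z)
          ≤ ∫⁻ v, ∫⁻ u, g (u, y) * g (u + v*(y-z), z) :=
            lintegral_mono' Measure.restrict_le_self (le_refl _)
        _ = ∫⁻ u, ∫⁻ v, g (u, y) * g (u + v*(y-z), z) := by
            refine lintegral_lintegral_swap (Measurable.aemeasurable ?_)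
            show Measurable fun q : ℝ × ℝ => g (q.2, y) * g (q.2 + q.1*(y - z), z)
            fun_prop
        _ = ∫⁻ u, g (u, y) * ∫⁻ v, g (u + v*(y-z), z) :=
            lintegral_congr fun u => lintegral_const_mul _ (by fun_prop)
        _ ≤ ∫⁻ u, g (u, y) * B z := by
            refine lintegral_mono fun u => ?_
            exact mul_le_mul_right (lint_comp_affine_le hc1 (fun w => g (w, z)) (by fun_prop) u) _
        _ = B y * B z := lintegral_mul_const _ (by fun_prop)
        _ = C0 * (J y z * H y ^ (2:ℝ) + J y z * H z ^ (2:ℝ)) + B y * B z := by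
            rw [hJ0]
            simp
  -- Step 6: integrate the bound
  have hJum : Measurable fun q : ℝ × ℝ => J q.1 q.2 := by
    rw [hJ]
    have : (fun q : ℝ × ℝ => (Set.Icc (q.1-1) (q.1+1)).indicator (1 : ℝ → ℝ≥0∞) q.2)
        = fun q : ℝ × ℝ => ({q : ℝ × ℝ | |q.1 - q.2| ≤ 1}).indicator 1 q := by
      ext q
      simp only [Set.indicator_apply, Set.mem_Icc, Set.mem_setOf_eq, abs_sub_le_iff]
      congr 1
      simp only [eq_iff_iff]
      constructor <;> intro h <;> constructor <;> linarith [h.1, h.2]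
    rw [this]
    exact measurable_const.indicator
      (measurableSet_le (by fun_prop) measurable_const)
  have hJint2 : ∀ z, ∫⁻ y, J y z = 2 := by
    intro z
    have : (fun y => J y z) = fun y => (Set.Icc (z-1) (z+1)).indicator 1 y := by
      ext y
      rw [hJsymm y z, hJ]
    rw [this, lintegral_indicator_one measurableSet_Icc, Real.volume_Icc,
      show z + 1 - (z - 1) = (2:ℝ) by ring]
    exact ENNReal.ofReal_ofNat 2
  have step6 : ∫⁻ y, ∫⁻ z, (C0 * (J y z * H y ^ (2:ℝ) + J y z * H z ^ (2:ℝ)) + B y * B z)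
      ≤ C0 * (4 * M2) + M1 ^ (2:ℝ) := by
    have hinner : ∀ y : ℝ, ∫⁻ z, (C0 * (J y z * H y ^ (2:ℝ) + J y z * H z ^ (2:ℝ)) + B y * B z)
        = C0 * (2 * H y ^ (2:ℝ) + ∫⁻ z, J y z * H z ^ (2:ℝ)) + B y * M1 := by
      intro y
      rw [lintegral_add_left]
      · congr 1
        · rw [lintegral_const_mul]
          · congr 1
            rw [lintegral_add_left ((hJm1 y).mul_const _)]
            congr 1
            rw [lintegral_mul_const _ (hJm1 y), hJint y, mul_comm]
          · exact ((hJm1 y).mul_const _).add (by fun_prop)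
        · rw [lintegral_const_mul _ hBm, hBsum]
      · exact (measurable_const.mul (((hJm1 y).mul_const _).add (by fun_prop)))
    calc ∫⁻ y, ∫⁻ z, (C0 * (J y z * H y ^ (2:ℝ) + J y z * H z ^ (2:ℝ)) + B y * B z)
        = ∫⁻ y, (C0 * (2 * H y ^ (2:ℝ) + ∫⁻ z, J y z * H z ^ (2:ℝ)) + B y * M1) :=
          lintegral_congr hinner
      _ = C0 * (2 * M2 + ∫⁻ y, ∫⁻ z, J y z * H z ^ (2:ℝ)) + M1 * M1 := by
          have hWm : Measurable fun y : ℝ => ∫⁻ z, J y z * H z ^ (2:ℝ) :=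
            Measurable.lintegral_prod_right'
              (f := fun q : ℝ × ℝ => J q.1 q.2 * H q.2 ^ (2:ℝ)) (by fun_prop)
          rw [lintegral_add_left, lintegral_const_mul, lintegral_add_left, lintegral_const_mul,
            lintegral_mul_const _ hBm, hBsum, hHsum]
          · fun_prop
          · fun_prop
          · fun_prop
          · fun_prop
      _ = C0 * (2 * M2 + 2 * M2) + M1 * M1 := by
          have hJHm : Measurable fun q : ℝ × ℝ => J q.1 q.2 * H q.2 ^ (2:ℝ) :=
            hJum.mul (by fun_prop)
          have hsw : ∫⁻ y, ∫⁻ z, J y z * H z ^ (2:ℝ) = 2 * M2 := by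
            rw [lintegral_lintegral_swap
              (f := fun y z => J y z * H z ^ (2:ℝ)) (Measurable.aemeasurable hJHm)]
            have : ∀ z : ℝ, ∫⁻ y, J y z * H z ^ (2:ℝ) = 2 * H z ^ (2:ℝ) := by
              intro z
              have hm : Measurable fun y => J y z := by
                rw [show (fun y => J y z) = J z from funext fun y => hJsymm y z]
                exact hJm1 z
              rw [lintegral_mul_const _ hm, hJint2 z]
            rw [lintegral_congr this, lintegral_const_mul _ (by fun_prop), hHsum]
          rw [hsw]
      _ ≤ C0 * (4 * M2) + M1 ^ (2:ℝ) := by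
          rw [sq_rpow]
          gcongr
          rw [show (4:ℝ≥0∞) = 2 + 2 by norm_num, add_mul]
  -- Assemble
  calc ∫⁻ v in A, ∫⁻ t, (∫⁻ y, g (t - v * y, y)) ^ (2:ℝ)
      = ∫⁻ v in A, ∫⁻ y, ∫⁻ z, ∫⁻ u, g (u, y) * g (u + v*(y-z), z) := by
        refine lintegral_congr fun v => ?_
        rw [lintegral_congr (step1 v), step2 v]
        exact lintegral_congr fun y => lintegral_congr fun z => step3 v y z
    _ = ∫⁻ y, ∫⁻ z, ∫⁻ v in A, ∫⁻ u, g (u, y) * g (u + v*(y-z), z) := step4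
    _ ≤ ∫⁻ y, ∫⁻ z, (C0 * (J y z * H y ^ (2:ℝ) + J y z * H z ^ (2:ℝ)) + B y * B z) :=
        lintegral_mono fun y => lintegral_mono' (le_refl _) (step5 y)
    _ ≤ C0 * (4 * M2) + M1 ^ (2:ℝ) := step6

lemma shear_mp (v : ℝ) :
    MeasurePreserving (fun p : ℝ × ℝ => (p.1 - v * p.2, p.2)) volume volume := by
  have h1 : MeasurePreserving (fun p : ℝ × ℝ => (p.1, p.2 - v * p.1))
      (volume.prod volume) (volume.prod volume) :=
    MeasurePreserving.skew_product (g := fun a t => t - v * a)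
      (MeasurePreserving.id _) (by fun_prop)
      (Filter.Eventually.of_forall fun a => map_sub_right_eq_self volume (v * a))
  have hswap : MeasurePreserving (Prod.swap : ℝ × ℝ → ℝ × ℝ)
      (volume.prod volume) (volume.prod volume) := Measure.measurePreserving_swap
  have h2 := (hswap.comp h1).comp hswap
  rw [Measure.volume_eq_prod]
  exact h2

theorem aux_slice (f : ℝ × ℝ → ℂ) (hfm : StronglyMeasurable f)
    (hf1 : Integrable f) (hf2 : MemLp f 2 volume) :
    ∃ E : Set ℝ, volume E = 0 ∧ ∀ v : ℝ, v ∉ E →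
      MemLp (fun t => radonAff f v t) 2 volume ∧
      ∀ᵐ τ : ℝ, FT1 (fun t => radonAff f v t) τ = FT2 f (τ, τ * v) := by
  set g : ℝ × ℝ → ℝ≥0∞ := fun p => (‖f p‖₊ : ℝ≥0∞) with hgdef
  have hgm : Measurable g := hfm.enorm
  set Φ : ℝ → ℝ≥0∞ := fun v => ∫⁻ t, (∫⁻ y, g (t - v * y, y)) ^ (2:ℝ) with hPhi
  have hΦm : Measurable Φ := by
    have h1 : Measurable fun q : ℝ × ℝ => ∫⁻ y, g (q.2 - q.1*y, y) :=
      Measurable.lintegral_prod_right'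
        (f := fun q : (ℝ×ℝ)×ℝ => g (q.1.2 - q.1.1*q.2, q.2)) (by fun_prop)
    exact Measurable.lintegral_prod_right'
      (f := fun q : ℝ × ℝ => (∫⁻ y, g (q.2 - q.1*y, y)) ^ (2:ℝ)) (by fun_prop)
  have hM1 : ∫⁻ p : ℝ×ℝ, g p < ⊤ := hf1.2
  have hM2 : ∫⁻ p : ℝ×ℝ, g p ^ (2:ℝ) < ⊤ := by
    have h := hf2.2
    rw [eLpNorm_eq_lintegral_rpow_enorm_toReal (by norm_num) (by norm_num)] at h
    simp only [ENNReal.toReal_ofNat] at h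
    rw [ENNReal.rpow_lt_top_iff_of_pos (by norm_num)] at h
    exact h
  have hEmeas : MeasurableSet {v : ℝ | Φ v = ⊤} := hΦm (measurableSet_singleton ⊤)
  refine ⟨{v : ℝ | Φ v = ⊤}, ?_, ?_⟩
  · have hn : ∀ n : ℕ, volume ({v : ℝ | Φ v = ⊤} ∩ Set.Icc (-(n:ℝ)) n) = 0 := by
      intro n
      have hfin : ∫⁻ v in Set.Icc (-(n:ℝ)) n, Φ v < ⊤ :=
        lt_of_le_of_lt (slice_sq g hgm n) (by
          apply ENNReal.add_lt_top.mpr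
          refine ⟨ENNReal.mul_lt_top ENNReal.ofReal_lt_top
            (ENNReal.mul_lt_top (by norm_num) hM2), ?_⟩
          exact ENNReal.rpow_lt_top_of_nonneg (by norm_num) hM1.ne)
      have hae := ae_lt_top hΦm hfin.ne
      have h0 := ae_iff.mp hae
      simp only [not_lt, top_le_iff] at h0
      rw [← Measure.restrict_apply hEmeas]
      exact h0
    have hsub : {v : ℝ | Φ v = ⊤}
        ⊆ ⋃ n : ℕ, ({v : ℝ | Φ v = ⊤} ∩ Set.Icc (-(n:ℝ)) n) := by
      intro v hv
      obtain ⟨n, hn'⟩ := exists_nat_ge |v|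
      refine Set.mem_iUnion.mpr ⟨n, hv, ?_⟩
      rw [Set.mem_Icc]
      constructor
      · linarith [neg_abs_le v]
      · linarith [le_abs_self v]
    exact measure_mono_null hsub (measure_iUnion_null hn)
  · intro v hv
    simp only [Set.mem_setOf_eq] at hv
    have hint_shear : Integrable (fun p : ℝ×ℝ => f (p.1 - v*p.2, p.2)) volume := by
      have := ((shear_mp v).integrable_comp hfm.aestronglyMeasurable).mpr hf1
      exact this
    constructor
    · -- MemLp
      have hsm : StronglyMeasurable fun t : ℝ => radonAff f v t := by
        have h1 : StronglyMeasurable fun q : ℝ × ℝ => f (q.1 - v*q.2, q.2) :=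
          hfm.comp_measurable (by fun_prop)
        exact h1.integral_prod_right'
      refine ⟨hsm.aestronglyMeasurable, ?_⟩
      rw [eLpNorm_eq_lintegral_rpow_enorm_toReal (by norm_num) (by norm_num)]
      simp only [ENNReal.toReal_ofNat]
      have hb : ∫⁻ t, (‖radonAff f v t‖₊ : ℝ≥0∞) ^ (2:ℝ) ≤ Φ v := by
        apply lintegral_mono
        intro t
        exact ENNReal.rpow_le_rpow (enorm_integral_le_lintegral_enorm _) (by norm_num)
      calc (∫⁻ t, (‖radonAff f v t‖₊ : ℝ≥0∞) ^ (2:ℝ)) ^ (1/2:ℝ)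
          ≤ (Φ v) ^ (1/2:ℝ) := by gcongr
        _ < ⊤ := ENNReal.rpow_lt_top_of_nonneg (by norm_num) hv
    · -- Fourier slice identity
      refine Filter.Eventually.of_forall fun τ => ?_
      have hnorm1 : ∀ t : ℝ, ‖Complex.exp (-2 * (Real.pi:ℂ) * Complex.I * (τ * t))‖ = 1 := by
        intro t
        rw [show (-2 * (Real.pi:ℂ) * Complex.I * (τ * t))
            = (((-2 * Real.pi * (τ * t) : ℝ) : ℂ)) * Complex.I by push_cast; ring]
        exact Complex.norm_exp_ofReal_mul_I _
      have hnorm2 : ∀ u y : ℝ,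
          ‖Complex.exp (-2 * (Real.pi:ℂ) * Complex.I * (τ * u + τ * v * y))‖ = 1 := by
        intro u y
        rw [show (-2 * (Real.pi:ℂ) * Complex.I * (τ * u + τ * v * y))
            = (((-2 * Real.pi * (τ * u + τ * v * y) : ℝ) : ℂ)) * Complex.I by push_cast; ring]
        exact Complex.norm_exp_ofReal_mul_I _
      have h2' : Integrable (fun p : ℝ×ℝ =>
          Complex.exp (-2 * (Real.pi:ℂ) * Complex.I * (τ * p.1)) * f (p.1 - v*p.2, p.2))
          volume := by
        refine hint_shear.bdd_mul ?_ (Filter.Eventually.of_forall fun p => le_of_eq (hnorm1 p.1))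
        exact (Continuous.aestronglyMeasurable (by fun_prop))
      have h3' : Integrable (fun p : ℝ×ℝ =>
          Complex.exp (-2 * (Real.pi:ℂ) * Complex.I * (τ * p.1 + τ * v * p.2)) * f p)
          volume := by
        refine hf1.bdd_mul ?_ (Filter.Eventually.of_forall fun p => le_of_eq (hnorm2 p.1 p.2))
        exact (Continuous.aestronglyMeasurable (by fun_prop))
      calc FT1 (fun t => radonAff f v t) τ
          = ∫ t : ℝ, ∫ y : ℝ,
              Complex.exp (-2 * (Real.pi:ℂ) * Complex.I * (τ * t)) * f (t - v*y, y) := by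
            refine integral_congr_ae (Filter.Eventually.of_forall fun t => ?_)
            exact (integral_const_mul _ _).symm
        _ = ∫ y : ℝ, ∫ t : ℝ,
              Complex.exp (-2 * (Real.pi:ℂ) * Complex.I * (τ * t)) * f (t - v*y, y) := by
            apply integral_integral_swap
            rw [← Measure.volume_eq_prod]
            exact h2'
        _ = ∫ y : ℝ, ∫ u : ℝ,
              Complex.exp (-2 * (Real.pi:ℂ) * Complex.I * (τ * u + τ * v * y)) * f (u, y) := by
            refine integral_congr_ae (Filter.Eventually.of_forall fun y => ?_)
            dsimp only
            have heq : (fun t : ℝ =>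
                Complex.exp (-2 * (Real.pi:ℂ) * Complex.I * (τ * t)) * f (t - v*y, y))
                = fun t : ℝ => (fun u : ℝ =>
                    Complex.exp (-2 * (Real.pi:ℂ) * Complex.I * (τ * u + τ * v * y)) * f (u, y))
                      (t - v*y) := by
              funext t
              simp only []
              congr 2
              push_cast
              ring
            rw [heq, integral_sub_right_eq_self (fun u : ℝ =>
              Complex.exp (-2 * (Real.pi:ℂ) * Complex.I * (τ * u + τ * v * y)) * f (u, y)) (v*y)]
        _ = ∫ u : ℝ, ∫ y : ℝ,
              Complex.exp (-2 * (Real.pi:ℂ) * Complex.I * (τ * u + τ * v * y)) * f (u, y) := by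
            apply integral_integral_swap
            rw [← Measure.volume_eq_prod]
            have : Integrable (fun p : ℝ×ℝ =>
                Complex.exp (-2 * (Real.pi:ℂ) * Complex.I * (τ * p.2 + τ * v * p.1)) * f (p.2, p.1))
                volume := by
              have hsw : Integrable (fun q : ℝ×ℝ => f (q.2, q.1)) volume := by
                rw [Measure.volume_eq_prod]
                have := hf1
                rw [Measure.volume_eq_prod] at this
                exact this.swap
              refine hsw.bdd_mul ?_ (Filter.Eventually.of_forall fun p => le_of_eq (hnorm2 p.2 p.1))
              exact (Continuous.aestronglyMeasurable (by fun_prop))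
            exact this
        _ = ∫ p : ℝ × ℝ,
              Complex.exp (-2 * (Real.pi:ℂ) * Complex.I * (τ * p.1 + τ * v * p.2)) * f p := by
            have h3'' : Integrable (Function.uncurry fun u y : ℝ =>
                Complex.exp (-2 * (Real.pi:ℂ) * Complex.I * (τ * u + τ * v * y)) * f (u, y))
                (volume.prod volume) := by
              rw [← Measure.volume_eq_prod]
              exact h3'
            have hii := integral_integral h3''
            rw [hii, ← Measure.volume_eq_prod]
        _ = FT2 f (τ, τ * v) := by
            show _ = ∫ x : ℝ × ℝ, Complex.exp (-2 * (Real.pi : ℂ) * Complex.I *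
              (((τ : ℝ) : ℂ) * x.1 + ((τ * v : ℝ) : ℂ) * x.2)) * f x
            refine integral_congr_ae (Filter.Eventually.of_forall fun p => ?_)
            dsimp only
            congr 2
            push_cast
            ring

end FourierSliceAux

/-- Fourier slice theorem for the affine Radon transform: for
`f ∈ L¹(ℝ²) ∩ L²(ℝ²)` there is a negligible set `E ⊆ ℝ` such that for `v ∉ E` the
function `R^aff f(v,·)` is in `L²(ℝ)` and `F(R^aff f(v,·))(τ) = Ff(τ, τv)` a.e. -/
theorem fourier_slice_affine_radon (f : ℝ × ℝ → ℂ)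
    (hf1 : Integrable f) (hf2 : MemLp f 2 volume) :
    ∃ E : Set ℝ, volume E = 0 ∧ ∀ v : ℝ, v ∉ E →
      MemLp (fun t => radonAff f v t) 2 volume ∧
      ∀ᵐ τ : ℝ, FT1 (fun t => radonAff f v t) τ = FT2 f (τ, τ * v) := by
  have hfm' := hf1.1
  set f' := hfm'.mk f with hf'def
  have hsm' : StronglyMeasurable f' := hfm'.stronglyMeasurable_mk
  have hae : f =ᵐ[volume] f' := hfm'.ae_eq_mk
  have hf1' : Integrable f' := hf1.congr hae
  have hf2' : MemLp f' 2 volume := hf2.ae_eq hae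
  obtain ⟨E, hE0, hE⟩ := aux_slice f' hsm' hf1' hf2'
  refine ⟨E, hE0, fun v hv => ?_⟩
  obtain ⟨hmem, haeτ⟩ := hE v hv
  have hshear := (shear_mp v).quasiMeasurePreserving.ae_eq_comp hae
  have hslice : ∀ᵐ t : ℝ, radonAff f v t = radonAff f' v t := by
    have hsh2 : ∀ᵐ p : ℝ × ℝ ∂((volume : Measure ℝ).prod volume),
        f (p.1 - v * p.2, p.2) = f' (p.1 - v * p.2, p.2) := by
      rw [← MeasureTheory.Measure.volume_eq_prod]
      filter_upwards [hshear] with p hp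
      exact hp
    have h2 := MeasureTheory.Measure.ae_ae_of_ae_prod hsh2
    filter_upwards [h2] with t ht
    exact integral_congr_ae (ht.mono fun y hy => hy)
  have hslice' : (fun t => radonAff f v t) =ᵐ[volume] fun t => radonAff f' v t := hslice
  constructor
  · exact hmem.ae_eq hslice'.symm
  · have hFT1 : ∀ τ : ℝ, FT1 (fun t => radonAff f v t) τ
        = FT1 (fun t => radonAff f' v t) τ := fun τ =>
      integral_congr_ae (hslice.mono fun t ht => by dsimp only; rw [ht])
    have hFT2 : ∀ ξ : ℝ × ℝ, FT2 f ξ = FT2 f' ξ := fun ξ =>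
      integral_congr_ae (hae.mono fun p hp => by dsimp only; rw [hp])
    filter_upwards [haeτ] with τ hτ
    rw [hFT1 τ, hτ, ← hFT2]


end
end

section
/- Let ψ ∈ S(R²) and Φ ∈ S(S). Then for every x ∈ R² the integral defining the shearlet synthesis operator, S^t_ψ Φ(x) = ∫_{R^×}∫_R∫_{R²} Φ(b,s,a) S_{b,s,a}ψ(x) db ds da/|a|³, is absolutely convergent. -/
open MeasureTheory Complex SchwartzMap

noncomputable section

lemma synth_aux_apart (a : ℝ) (ha : a ≠ 0) :
    (1 + |a|⁻¹) * ((|a|^3)⁻¹ * (|a|^6 + (|a|^6)⁻¹)⁻¹) ≤ 4 * (1 + a^2)⁻¹ := by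
  set t := |a| with htdef
  have ht : 0 < t := abs_pos.2 ha
  have h2 : a ^ 2 = t ^ 2 := (_root_.sq_abs a).symm
  rw [h2]
  have e1 : (1 + t⁻¹) * ((t^3)⁻¹ * (t^6 + (t^6)⁻¹)⁻¹) = (t^3 + t^2)/(t^12 + 1) := by
    field_simp
  rw [e1, show (4:ℝ)*(1+t^2)⁻¹ = 4/(1+t^2) from (div_eq_mul_inv 4 _).symm,
    div_le_div_iff₀ (by positivity) (by positivity)]
  have key : ∀ k : ℕ, k ≤ 12 → t^k ≤ 1 + t^12 := by
    intro k hk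
    rcases le_total t 1 with h | h
    · calc t^k ≤ 1 := pow_le_one₀ ht.le h
        _ ≤ 1 + t^12 := by linarith [pow_nonneg ht.le 12]
    · calc t^k ≤ t^12 := pow_le_pow_right₀ h hk
        _ ≤ 1 + t^12 := by linarith [pow_nonneg ht.le 12]
  nlinarith [key 2 (by norm_num), key 3 (by norm_num), key 4 (by norm_num), key 5 (by norm_num)]

lemma synth_aux_rpow_bd (a : ℝ) (ha : a ≠ 0) : |a| ^ (-(3:ℝ)/4) ≤ 1 + |a|⁻¹ := by
  have ht : 0 < |a| := abs_pos.2 ha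
  rcases le_total 1 |a| with h | h
  · have : |a| ^ (-(3:ℝ)/4) ≤ 1 := Real.rpow_le_one_of_one_le_of_nonpos h (by norm_num)
    have : (0:ℝ) ≤ |a|⁻¹ := by positivity
    linarith [Real.rpow_le_one_of_one_le_of_nonpos h (show (-(3:ℝ)/4) ≤ 0 by norm_num)]
  · have h1 : |a| ^ (-(3:ℝ)/4) ≤ |a| ^ (-1:ℝ) :=
      Real.rpow_le_rpow_of_exponent_ge ht h (by norm_num)
    rw [Real.rpow_neg_one] at h1
    linarith


/-- For `ψ ∈ 𝒮(ℝ²)` and `Φ ∈ 𝒮(𝕊)`, the integral defining the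
shearlet synthesis operator `S^t_ψ Φ(x)` is absolutely convergent for every `x`. -/
theorem synthesis_integral_absolutely_convergent (ψ : SchwartzMap (ℝ × ℝ) ℂ)
    (Φ : ℝ → ℝ → ℝ → ℝ → ℂ) (hΦ : HLocalized Φ) :
    ∀ x : ℝ × ℝ,
      Integrable
        (fun q : (ℝ × ℝ) × ℝ × ℝ =>
          ((|q.2.2| ^ 3)⁻¹ : ℝ) •
            (Φ q.1.1 q.1.2 q.2.1 q.2.2 *
              shearletFn (⇑ψ) q.1.1 q.1.2 q.2.1 q.2.2 x)) volume := by
  intro x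
  obtain ⟨hsm, hbound⟩ := hΦ
  obtain ⟨C, hC⟩ := hbound 2 2 2 6 0 0 0 0
  simp only [shearDeriv, Function.iterate_zero, id] at hC
  have hC0 : 0 ≤ C := by
    have h := hC 0 0 0 1 one_ne_zero
    have h1 : (0:ℝ) ≤ jb 0 ^ 2 * jb 0 ^ 2 * jb 0 ^ 2 * (|(1:ℝ)| ^ 6 + (|(1:ℝ)| ^ 6)⁻¹) *
        ‖Φ 0 0 0 1‖ := by positivity
    linarith
  obtain ⟨M, hMpos, hM⟩ := ψ.decay 0 0
  have hM' : ∀ y, ‖ψ y‖ ≤ M := by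
    intro y
    have := hM y
    simpa [norm_iteratedFDeriv_zero] using this
  have hM0 : 0 ≤ M := hMpos.le
  -- jb squared
  have hjb : ∀ t : ℝ, jb t ^ 2 = 1 + t ^ 2 := fun t =>
    Real.sq_sqrt (by positivity)
  -- the null set
  have hnull : volume {q : (ℝ × ℝ) × ℝ × ℝ | q.2.2 = 0} = 0 := by
    have he : {q : (ℝ × ℝ) × ℝ × ℝ | q.2.2 = 0} =
        (Set.univ : Set (ℝ × ℝ)) ×ˢ ((Set.univ : Set ℝ) ×ˢ ({0} : Set ℝ)) := by
      ext ⟨p, s, a⟩; simp [eq_comm]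
    rw [he, Measure.volume_eq_prod, Measure.prod_prod, Measure.volume_eq_prod,
      Measure.prod_prod]
    simp
  have hae : ∀ᵐ q : (ℝ × ℝ) × ℝ × ℝ, q.2.2 ≠ 0 := by
    rw [ae_iff]; simpa [not_not] using hnull
  -- measurability
  have hUopen : IsOpen {q : (ℝ × ℝ) × ℝ × ℝ | q.2.2 ≠ 0} :=
    isOpen_compl_singleton.preimage (continuous_snd.comp continuous_snd)
  have hane : ∀ q : (ℝ × ℝ) × ℝ × ℝ, q ∈ {q : (ℝ × ℝ) × ℝ × ℝ | q.2.2 ≠ 0} →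
      q.2.2 ≠ 0 := fun q hq => hq
  have hcont : ContinuousOn
      (fun q : (ℝ × ℝ) × ℝ × ℝ =>
        ((|q.2.2| ^ 3)⁻¹ : ℝ) •
          (Φ q.1.1 q.1.2 q.2.1 q.2.2 *
            shearletFn (⇑ψ) q.1.1 q.1.2 q.2.1 q.2.2 x))
      {q : (ℝ × ℝ) × ℝ × ℝ | q.2.2 ≠ 0} := by
    have ca : ContinuousOn (fun q : (ℝ × ℝ) × ℝ × ℝ => q.2.2)
        {q : (ℝ × ℝ) × ℝ × ℝ | q.2.2 ≠ 0} :=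
      (continuous_snd.comp continuous_snd).continuousOn
    have c1 : ContinuousOn (fun q : (ℝ × ℝ) × ℝ × ℝ => ((|q.2.2| ^ 3)⁻¹ : ℝ))
        {q : (ℝ × ℝ) × ℝ × ℝ | q.2.2 ≠ 0} := by
      apply ContinuousOn.inv₀
      · exact ((_root_.continuous_abs.comp (continuous_snd.comp continuous_snd)).pow 3).continuousOn
      · intro q hq; have := hane q hq; positivity
    have c2 : ContinuousOn (fun q : (ℝ × ℝ) × ℝ × ℝ => Φ q.1.1 q.1.2 q.2.1 q.2.2)
        {q : (ℝ × ℝ) × ℝ × ℝ | q.2.2 ≠ 0} := by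
      have hmap : Set.MapsTo (fun q : (ℝ × ℝ) × ℝ × ℝ => (q.1.1, q.1.2, q.2.1, q.2.2))
          {q : (ℝ × ℝ) × ℝ × ℝ | q.2.2 ≠ 0} {p : ℝ × ℝ × ℝ × ℝ | p.2.2.2 ≠ 0} :=
        fun q hq => hq
      exact (hsm.continuousOn.comp
        (show Continuous (fun q : (ℝ × ℝ) × ℝ × ℝ => (q.1.1, q.1.2, q.2.1, q.2.2)) by
          fun_prop).continuousOn hmap)
    have c3 : ContinuousOn
        (fun q : (ℝ × ℝ) × ℝ × ℝ => shearletFn (⇑ψ) q.1.1 q.1.2 q.2.1 q.2.2 x)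
        {q : (ℝ × ℝ) × ℝ × ℝ | q.2.2 ≠ 0} := by
      unfold shearletFn
      apply ContinuousOn.mul
      · apply Continuous.comp_continuousOn continuous_ofReal
        apply ContinuousOn.rpow_const
        · exact (_root_.continuous_abs.comp (continuous_snd.comp continuous_snd)).continuousOn
        · intro q hq; exact Or.inl (abs_ne_zero.2 (hane q hq))
      · apply ψ.continuous.comp_continuousOn
        apply ContinuousOn.prodMk
        · exact ContinuousOn.div (by fun_prop) ca (fun q hq => hane q hq)
        · exact ContinuousOn.div (by fun_prop) ca (fun q hq => hane q hq)
    exact c1.smul (c2.mul c3)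
  have hmeas : AEStronglyMeasurable
      (fun q : (ℝ × ℝ) × ℝ × ℝ =>
        ((|q.2.2| ^ 3)⁻¹ : ℝ) •
          (Φ q.1.1 q.1.2 q.2.1 q.2.2 *
            shearletFn (⇑ψ) q.1.1 q.1.2 q.2.1 q.2.2 x)) volume := by
    have h1 := hcont.aestronglyMeasurable (μ := volume) hUopen.measurableSet
    have h2 : volume.restrict {q : (ℝ × ℝ) × ℝ × ℝ | q.2.2 ≠ 0} = volume :=
      Measure.restrict_eq_self_of_ae_mem (s := {q : (ℝ × ℝ) × ℝ × ℝ | q.2.2 ≠ 0}) hae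
    rwa [h2] at h1
  -- dominating function
  set K : ℝ := 4 * C * M with hK
  have hgint : Integrable (fun q : (ℝ × ℝ) × ℝ × ℝ =>
      K * ((1 + q.1.1 ^ 2)⁻¹ * (1 + q.1.2 ^ 2)⁻¹ *
        ((1 + q.2.1 ^ 2)⁻¹ * (1 + q.2.2 ^ 2)⁻¹))) volume := by
    have h1 : Integrable (fun t : ℝ => (1 + t ^ 2)⁻¹) := integrable_inv_one_add_sq
    have h12 : Integrable (fun p : ℝ × ℝ => (1 + p.1 ^ 2)⁻¹ * (1 + p.2 ^ 2)⁻¹) volume := by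
      rw [Measure.volume_eq_prod]; exact h1.mul_prod h1
    have h4 : Integrable (fun q : (ℝ × ℝ) × ℝ × ℝ =>
        ((1 + q.1.1 ^ 2)⁻¹ * (1 + q.1.2 ^ 2)⁻¹) *
          ((1 + q.2.1 ^ 2)⁻¹ * (1 + q.2.2 ^ 2)⁻¹)) volume := by
      rw [Measure.volume_eq_prod]; exact h12.mul_prod h12
    exact h4.const_mul K
  apply hgint.mono' hmeas
  filter_upwards [hae] with q hq
  obtain ⟨⟨b1, b2⟩, s, a⟩ := q
  simp only at hq ⊢
  have ha : a ≠ 0 := hq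
  have hta : 0 < |a| := abs_pos.2 ha
  -- norm computation
  have hnorm : ‖((|a| ^ 3)⁻¹ : ℝ) • (Φ b1 b2 s a * shearletFn (⇑ψ) b1 b2 s a x)‖ =
      (|a| ^ 3)⁻¹ * (‖Φ b1 b2 s a‖ *
        (|a| ^ (-(3:ℝ)/4) * ‖ψ (((x.1 - b1) + s * (x.2 - b2)) / a,
          Real.sqrt |a| * (x.2 - b2) / a)‖)) := by
    rw [norm_smul, norm_mul]
    unfold shearletFn
    rw [norm_mul, Complex.norm_real]
    rw [Real.norm_eq_abs, Real.norm_eq_abs, _root_.abs_of_nonneg (by positivity : (0:ℝ) ≤ (|a| ^ 3)⁻¹),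
      _root_.abs_of_nonneg (Real.rpow_nonneg (abs_nonneg a) _)]
  rw [hnorm]
  -- Φ bound
  have hD : (0:ℝ) < (1 + b1 ^ 2) * (1 + b2 ^ 2) * (1 + s ^ 2) := by positivity
  have hE : (0:ℝ) < |a| ^ 6 + (|a| ^ 6)⁻¹ := by positivity
  have hΦb : ‖Φ b1 b2 s a‖ ≤
      C * (((1 + b1 ^ 2) * (1 + b2 ^ 2) * (1 + s ^ 2))⁻¹ * (|a| ^ 6 + (|a| ^ 6)⁻¹)⁻¹) := by
    have h := hC b1 b2 s a ha
    rw [hjb, hjb, hjb] at h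
    calc ‖Φ b1 b2 s a‖ =
        (((1 + b1 ^ 2) * (1 + b2 ^ 2) * (1 + s ^ 2)) * (|a| ^ 6 + (|a| ^ 6)⁻¹) *
          ‖Φ b1 b2 s a‖) * (((1 + b1 ^ 2) * (1 + b2 ^ 2) * (1 + s ^ 2))⁻¹ *
            (|a| ^ 6 + (|a| ^ 6)⁻¹)⁻¹) := by
          field_simp
      _ ≤ C * (((1 + b1 ^ 2) * (1 + b2 ^ 2) * (1 + s ^ 2))⁻¹ *
            (|a| ^ 6 + (|a| ^ 6)⁻¹)⁻¹) :=
          mul_le_mul_of_nonneg_right h (by positivity)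
  have hψb : ‖ψ (((x.1 - b1) + s * (x.2 - b2)) / a, Real.sqrt |a| * (x.2 - b2) / a)‖ ≤ M :=
    hM' _
  have hrp := synth_aux_rpow_bd a ha
  have hap := synth_aux_apart a ha
  calc (|a| ^ 3)⁻¹ * (‖Φ b1 b2 s a‖ * (|a| ^ (-(3:ℝ)/4) * ‖ψ _‖))
      ≤ (|a| ^ 3)⁻¹ * ((C * (((1 + b1 ^ 2) * (1 + b2 ^ 2) * (1 + s ^ 2))⁻¹ *
          (|a| ^ 6 + (|a| ^ 6)⁻¹)⁻¹)) * ((1 + |a|⁻¹) * M)) := by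
        gcongr
      _ = (C * M) * ((((1 + b1 ^ 2) * (1 + b2 ^ 2) * (1 + s ^ 2))⁻¹) *
          ((1 + |a|⁻¹) * ((|a| ^ 3)⁻¹ * (|a| ^ 6 + (|a| ^ 6)⁻¹)⁻¹))) := by ring
      _ ≤ (C * M) * ((((1 + b1 ^ 2) * (1 + b2 ^ 2) * (1 + s ^ 2))⁻¹) *
          (4 * (1 + a ^ 2)⁻¹)) := by gcongr
      _ = K * ((1 + b1 ^ 2)⁻¹ * (1 + b2 ^ 2)⁻¹ * ((1 + s ^ 2)⁻¹ * (1 + a ^ 2)⁻¹)) := by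
          rw [hK]; field_simp


end
end

section
/- Let ψ ∈ S(R²), f ∈ L¹(R²) ∩ L²(R²) and Φ ∈ S(S). Then ∫_{R²} f(x) · S^t_{conj(ψ)} Φ(x) dx = ∫_{R^×}∫_R∫_{R²} S_ψ f(b,s,a) Φ(b,s,a) db ds da/|a|³, where conj(ψ) denotes the complex conjugate of ψ. -/
open MeasureTheory Complex SchwartzMap

noncomputable section

private abbrev ZS : Type := (ℝ × ℝ) × (ℝ × ℝ) × ℝ × ℝ

private lemma shearlet_aux_null : (volume : Measure ZS) {z : ZS | z.2.2.2 = 0} = 0 := by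
  have q : Measure.QuasiMeasurePreserving (fun z : ZS => z.2.2.2) volume volume :=
    (Measure.quasiMeasurePreserving_snd.comp
      Measure.quasiMeasurePreserving_snd).comp Measure.quasiMeasurePreserving_snd
  have h : {z : ZS | z.2.2.2 = 0} = (fun z : ZS => z.2.2.2) ⁻¹' {0} := rfl
  rw [h]
  exact q.preimage_null (measure_singleton 0)

private lemma shearlet_aux_restrict :
    (volume : Measure ZS).restrict {z : ZS | z.2.2.2 ≠ 0} = volume := by
  apply Measure.restrict_eq_self_of_ae_mem
  rw [MeasureTheory.ae_iff]
  simpa using shearlet_aux_null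

private lemma shearlet_aux_pow {t : ℝ} (ht : 0 < t) :
    (t ^ 3)⁻¹ * t ^ (-(3 : ℝ)/4) * (t ^ 6 + (t ^ 6)⁻¹)⁻¹ ≤ 2 * (1 + t ^ 2)⁻¹ := by
  have h6 : (0:ℝ) < t ^ 6 := by positivity
  have h2 : (0:ℝ) < 1 + t ^ 2 := by positivity
  have e2 : (t ^ 6 + (t ^ 6)⁻¹)⁻¹ ≤ t ^ 6 := by
    calc (t ^ 6 + (t ^ 6)⁻¹)⁻¹ ≤ ((t ^ 6)⁻¹)⁻¹ :=
          inv_anti₀ (by positivity) (le_add_of_nonneg_left (by positivity))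
      _ = t ^ 6 := inv_inv _
  have e2' : (t ^ 6 + (t ^ 6)⁻¹)⁻¹ ≤ (t ^ 6)⁻¹ :=
    inv_anti₀ h6 (le_add_of_nonneg_right (by positivity))
  rcases le_total t 1 with hle | hge
  · have e1 : t ^ (-(3 : ℝ)/4) ≤ (t ^ 3)⁻¹ := by
      have h := Real.rpow_le_rpow_of_exponent_ge ht hle (by norm_num : (-3 : ℝ) ≤ -(3:ℝ)/4)
      calc t ^ (-(3:ℝ)/4) ≤ t ^ (-3 : ℝ) := h
        _ = (t ^ 3)⁻¹ := by
            rw [show (-3 : ℝ) = -((3:ℕ) : ℝ) by norm_num, Real.rpow_neg ht.le,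
              Real.rpow_natCast]
    calc (t ^ 3)⁻¹ * t ^ (-(3 : ℝ)/4) * (t ^ 6 + (t ^ 6)⁻¹)⁻¹
        ≤ (t ^ 3)⁻¹ * (t ^ 3)⁻¹ * t ^ 6 :=
          mul_le_mul (mul_le_mul le_rfl e1 (by positivity) (by positivity)) e2
            (by positivity) (by positivity)
      _ = 1 := by field_simp
      _ ≤ 2 * (1 + t ^ 2)⁻¹ := by
          rw [← div_eq_mul_inv]
          exact (one_le_div h2).mpr (by nlinarith)
  · have e1 : t ^ (-(3 : ℝ)/4) ≤ 1 :=
      Real.rpow_le_one_of_one_le_of_nonpos hge (by norm_num)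
    have h3 : (1:ℝ) ≤ t ^ 3 := by nlinarith
    calc (t ^ 3)⁻¹ * t ^ (-(3 : ℝ)/4) * (t ^ 6 + (t ^ 6)⁻¹)⁻¹
        ≤ 1 * 1 * (t ^ 6)⁻¹ :=
          mul_le_mul (mul_le_mul (inv_le_one_of_one_le₀ h3) e1
            (by positivity) (by norm_num)) e2' (by positivity) (by norm_num)
      _ = (t ^ 6)⁻¹ := by ring
      _ ≤ 2 * (1 + t ^ 2)⁻¹ := by
          rw [← div_eq_mul_inv, inv_eq_one_div, div_le_div_iff₀ h6 h2]
          have ht2 : t ^ 2 ≤ t ^ 6 := pow_le_pow_right₀ hge (by norm_num)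
          have ht1 : (1:ℝ) ≤ t ^ 6 := by nlinarith
          nlinarith

/-- Duality relation between the shearlet transform and the
shearlet synthesis operator:
`∫ f(x) S^t_{conj ψ} Φ(x) dx = ∫∫∫ S_ψ f(b,s,a) Φ(b,s,a) db ds da/|a|³`. -/
theorem shearlet_synthesis_duality (ψ : SchwartzMap (ℝ × ℝ) ℂ)
    (f : ℝ × ℝ → ℂ) (hf1 : Integrable f) (hf2 : MemLp f 2 volume)
    (Φ : ℝ → ℝ → ℝ → ℝ → ℂ) (hΦ : HLocalized Φ) :
    ∫ x : ℝ × ℝ, f x * synthOp (fun y => (starRingEnd ℂ) (ψ y)) Φ x =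
      ∫ q : (ℝ × ℝ) × ℝ × ℝ,
        ((|q.2.2| ^ 3)⁻¹ : ℝ) •
          (shearTrans (⇑ψ) f q.1.1 q.1.2 q.2.1 q.2.2 *
            Φ q.1.1 q.1.2 q.2.1 q.2.2) := by
  classical
  set ψc : ℝ × ℝ → ℂ := fun y => (starRingEnd ℂ) (ψ y) with hψc
  set F : ZS → ℂ := fun z =>
    f z.1 * (((|z.2.2.2| ^ 3)⁻¹ : ℝ) •
      (Φ z.2.1.1 z.2.1.2 z.2.2.1 z.2.2.2 *
        shearletFn ψc z.2.1.1 z.2.1.2 z.2.2.1 z.2.2.2 z.1)) with hF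
  -- bounds on ψ and Φ
  obtain ⟨Cψ, hCψ⟩ := ψ.decay 0 0
  have hψb : ∀ x, ‖ψ x‖ ≤ Cψ := fun x => by simpa using hCψ.2 x
  have hCψ0 : 0 ≤ Cψ := le_trans (norm_nonneg _) (hψb 0)
  obtain ⟨C, hC⟩ := hΦ.2 2 2 2 6 0 0 0 0
  have hjb : ∀ x : ℝ, jb x ^ 2 = 1 + x ^ 2 := fun x => Real.sq_sqrt (by positivity)
  have hC' : ∀ b1 b2 s a : ℝ, a ≠ 0 →
      (1 + b1 ^ 2) * (1 + b2 ^ 2) * (1 + s ^ 2) * (|a| ^ 6 + (|a| ^ 6)⁻¹) *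
        ‖Φ b1 b2 s a‖ ≤ C := by
    intro b1 b2 s a ha
    have h := hC b1 b2 s a ha
    simp only [shearDeriv, Function.iterate_zero, id_eq] at h
    rwa [hjb, hjb, hjb] at h
  have hC0 : 0 ≤ C := le_trans (by positivity) (hC' 0 0 0 1 one_ne_zero)
  -- the dominating function H
  set g0 : ℝ × ℝ → ℝ := fun p => (1 + p.1 ^ 2)⁻¹ * (1 + p.2 ^ 2)⁻¹ with hg0def
  set H : ZS → ℝ := fun z => ‖f z.1‖ * (Cψ * C * 2 * (g0 z.2.1 * g0 z.2.2)) with hH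
  have hg0 : Integrable g0 := by
    rw [Measure.volume_eq_prod]
    exact integrable_inv_one_add_sq.mul_prod integrable_inv_one_add_sq
  have hq : Integrable (fun q : (ℝ × ℝ) × ℝ × ℝ => g0 q.1 * g0 q.2) := by
    rw [Measure.volume_eq_prod]
    exact hg0.mul_prod hg0
  have hHint : Integrable H := by
    rw [Measure.volume_eq_prod]
    exact hf1.norm.mul_prod (hq.const_mul (Cψ * C * 2))
  -- measurability of F
  have ca : Continuous fun z : ZS => z.2.2.2 := by fun_prop
  have hU : MeasurableSet {z : ZS | z.2.2.2 ≠ 0} :=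
    (isOpen_compl_singleton.preimage ca).measurableSet
  have hψcc : Continuous ψc := Complex.continuous_conj.comp ψ.continuous
  have hGc : ContinuousOn (fun z : ZS =>
      ((|z.2.2.2| ^ 3)⁻¹ : ℝ) • (Φ z.2.1.1 z.2.1.2 z.2.2.1 z.2.2.2 *
        shearletFn ψc z.2.1.1 z.2.1.2 z.2.2.1 z.2.2.2 z.1))
      {z : ZS | z.2.2.2 ≠ 0} := by
    simp only [shearletFn]
    apply ContinuousOn.fun_smul
    · exact ((ca.abs.pow 3).continuousOn).inv₀
        fun z hz => pow_ne_zero _ (abs_ne_zero.mpr hz)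
    apply ContinuousOn.fun_mul
    · exact (hΦ.1.continuousOn).comp
        ((by fun_prop : Continuous fun z : ZS =>
          (z.2.1.1, z.2.1.2, z.2.2.1, z.2.2.2)).continuousOn)
        (fun z hz => hz)
    apply ContinuousOn.fun_mul
    · exact Complex.continuous_ofReal.comp_continuousOn
        ((ca.abs.continuousOn).rpow_const fun z hz => Or.inl (abs_ne_zero.mpr hz))
    · apply hψcc.comp_continuousOn
      apply ContinuousOn.prodMk
      · exact ContinuousOn.div
          ((by fun_prop : Continuous fun z : ZS =>
            z.1.1 - z.2.1.1 + z.2.2.1 * (z.1.2 - z.2.1.2)).continuousOn)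
          ca.continuousOn (fun z hz => hz)
      · exact ContinuousOn.div
          ((by fun_prop : Continuous fun z : ZS =>
            Real.sqrt |z.2.2.2| * (z.1.2 - z.2.1.2)).continuousOn)
          ca.continuousOn (fun z hz => hz)
  have hFm : AEStronglyMeasurable F volume := by
    apply AEStronglyMeasurable.mul
    · rw [Measure.volume_eq_prod]
      exact hf1.aestronglyMeasurable.comp_quasiMeasurePreserving
        Measure.quasiMeasurePreserving_fst
    · have h : AEStronglyMeasurable _
          ((volume : Measure ZS).restrict {z : ZS | z.2.2.2 ≠ 0}) :=
        hGc.aestronglyMeasurable hU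
      rwa [shearlet_aux_restrict] at h
  -- pointwise bound ‖F z‖ ≤ H z
  have hFbound : ∀ z : ZS, ‖F z‖ ≤ H z := by
    rintro ⟨x, ⟨b1, b2⟩, s, a⟩
    have hHval : H (x, (b1, b2), s, a) =
        ‖f x‖ * (Cψ * C * 2 * (((1 + b1 ^ 2)⁻¹ * (1 + b2 ^ 2)⁻¹) *
          ((1 + s ^ 2)⁻¹ * (1 + a ^ 2)⁻¹))) := by
      simp only [hH, hg0def]
    by_cases ha : a = 0
    · subst ha
      have : F (x, (b1, b2), s, 0) = 0 := by
        simp [hF]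
      rw [this, hHval, norm_zero]
      have hg1 : (0:ℝ) ≤ (1 + b1 ^ 2)⁻¹ * (1 + b2 ^ 2)⁻¹ := by positivity
      have hg2 : (0:ℝ) ≤ (1 + s ^ 2)⁻¹ * (1 + (0:ℝ) ^ 2)⁻¹ := by positivity
      exact mul_nonneg (norm_nonneg _)
        (mul_nonneg (mul_nonneg (mul_nonneg hCψ0 hC0) (by norm_num))
          (mul_nonneg hg1 hg2))
    · have ht : (0:ℝ) < |a| := abs_pos.mpr ha
      have h6 : (0:ℝ) < |a| ^ 6 := by positivity
      set u : ℝ × ℝ := ((x.1 - b1 + s * (x.2 - b2)) / a,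
        Real.sqrt |a| * (x.2 - b2) / a) with hu
      have hnorm : ‖F (x, (b1, b2), s, a)‖ =
          ‖f x‖ * ((|a| ^ 3)⁻¹ * (‖Φ b1 b2 s a‖ *
            (|a| ^ (-(3:ℝ)/4) * ‖ψ u‖))) := by
        simp only [hF, shearletFn, hψc, hu]
        rw [norm_mul, norm_smul, norm_mul, norm_mul]
        rw [Real.norm_eq_abs, _root_.abs_of_nonneg (by positivity : (0:ℝ) ≤ (|a| ^ 3)⁻¹)]
        rw [Complex.norm_real, Real.norm_eq_abs,
          _root_.abs_of_nonneg (Real.rpow_nonneg (abs_nonneg a) _), RCLike.norm_conj]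
      have hΦb : ‖Φ b1 b2 s a‖ ≤
          C * (((1 + b1 ^ 2) * (1 + b2 ^ 2) * (1 + s ^ 2)) *
            (|a| ^ 6 + (|a| ^ 6)⁻¹))⁻¹ := by
        have hP : (0:ℝ) < ((1 + b1 ^ 2) * (1 + b2 ^ 2) * (1 + s ^ 2)) *
            (|a| ^ 6 + (|a| ^ 6)⁻¹) :=
          mul_pos (by positivity) (add_pos h6 (inv_pos.mpr h6))
        rw [← div_eq_mul_inv, le_div_iff₀ hP]
        calc ‖Φ b1 b2 s a‖ * (((1 + b1 ^ 2) * (1 + b2 ^ 2) * (1 + s ^ 2)) *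
              (|a| ^ 6 + (|a| ^ 6)⁻¹))
            = (1 + b1 ^ 2) * (1 + b2 ^ 2) * (1 + s ^ 2) *
              (|a| ^ 6 + (|a| ^ 6)⁻¹) * ‖Φ b1 b2 s a‖ := by ring
          _ ≤ C := hC' b1 b2 s a ha
      rw [hnorm, hHval]
      calc ‖f x‖ * ((|a| ^ 3)⁻¹ * (‖Φ b1 b2 s a‖ * (|a| ^ (-(3:ℝ)/4) * ‖ψ u‖)))
          ≤ ‖f x‖ * ((|a| ^ 3)⁻¹ *
            ((C * (((1 + b1 ^ 2) * (1 + b2 ^ 2) * (1 + s ^ 2)) *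
              (|a| ^ 6 + (|a| ^ 6)⁻¹))⁻¹) * (|a| ^ (-(3:ℝ)/4) * Cψ))) := by
            gcongr
            exact hψb u
        _ = (‖f x‖ * (C * Cψ * ((1 + b1 ^ 2) * (1 + b2 ^ 2) * (1 + s ^ 2))⁻¹)) *
            ((|a| ^ 3)⁻¹ * |a| ^ (-(3:ℝ)/4) * (|a| ^ 6 + (|a| ^ 6)⁻¹)⁻¹) := by
            rw [mul_inv]; ring
        _ ≤ (‖f x‖ * (C * Cψ * ((1 + b1 ^ 2) * (1 + b2 ^ 2) * (1 + s ^ 2))⁻¹)) *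
            (2 * (1 + |a| ^ 2)⁻¹) := by
            apply mul_le_mul_of_nonneg_left (shearlet_aux_pow ht)
            exact mul_nonneg (norm_nonneg _)
              (mul_nonneg (mul_nonneg hC0 hCψ0) (by positivity))
        _ = ‖f x‖ * (Cψ * C * 2 * (((1 + b1 ^ 2)⁻¹ * (1 + b2 ^ 2)⁻¹) *
            ((1 + s ^ 2)⁻¹ * (1 + a ^ 2)⁻¹))) := by
            rw [_root_.sq_abs a, mul_inv, mul_inv]; ring
  -- F is integrable
  have hFint : Integrable F := hHint.mono' hFm (Filter.Eventually.of_forall hFbound)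
  -- reduction of the two sides of the identity
  have hL : ∀ x : ℝ × ℝ, f x * synthOp ψc Φ x = ∫ q : (ℝ × ℝ) × ℝ × ℝ, F (x, q) := by
    intro x
    rw [synthOp, ← integral_const_mul]
  have hR : ∀ q : (ℝ × ℝ) × ℝ × ℝ,
      ((|q.2.2| ^ 3)⁻¹ : ℝ) • (shearTrans (⇑ψ) f q.1.1 q.1.2 q.2.1 q.2.2 *
        Φ q.1.1 q.1.2 q.2.1 q.2.2) = ∫ x : ℝ × ℝ, F (x, q) := by
    intro q
    rw [shearTrans, ← integral_mul_const, ← integral_smul]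
    refine integral_congr_ae (Filter.Eventually.of_forall fun x => ?_)
    simp only [hF, hψc, shearletFn, map_mul, Complex.conj_ofReal, Complex.real_smul]
    ring
  calc ∫ x : ℝ × ℝ, f x * synthOp ψc Φ x
      = ∫ x : ℝ × ℝ, ∫ q : (ℝ × ℝ) × ℝ × ℝ, F (x, q) :=
        integral_congr_ae (Filter.Eventually.of_forall hL)
    _ = ∫ q : (ℝ × ℝ) × ℝ × ℝ, ∫ x : ℝ × ℝ, F (x, q) := by
        apply integral_integral_swap
        rw [← Measure.volume_eq_prod]
        exact hFint
    _ = ∫ q : (ℝ × ℝ) × ℝ × ℝ,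
        ((|q.2.2| ^ 3)⁻¹ : ℝ) • (shearTrans (⇑ψ) f q.1.1 q.1.2 q.2.1 q.2.2 *
          Φ q.1.1 q.1.2 q.2.1 q.2.2) :=
        integral_congr_ae (Filter.Eventually.of_forall fun q => (hR q).symm)


end
end
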